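/- arXiv:0809.3941 — 2 statements merged into one kernel-verified Lean document; each statement's English description precedes it below -/
import Mathlib

section
/- Let (X,d) be a compact metric space and f : X → X a continuous map with the specification property. Then every f-invariant Borel probability measure μ on X (not necessarily ergodic) has a generic point: there exists x ∈ X such that (1/n) S_nφ(x) → ∫φ dμ as n → ∞ for every continuous φ : X → ℝ; equivalently, the empirical measures δ_{x,n} = (1/n) Σ_{k=0}^{n−1} δ_{f^k(x)} converge to μ in the weak* topology. -/
open MeasureTheory Filter Topology Set
open scoped ENNReal NNReal

section CommonDefs

variable {X : Type*} [MetricSpace X]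

/-- The Bowen dynamical ball `B_n(x, ε)`. -/
def bowenBall (f : X → X) (ε : ℝ) (n : ℕ) (x : X) : Set X :=
  {y | ∀ i < n, dist (f^[i] x) (f^[i] y) < ε}

/-- The specification property. -/
def SpecificationProperty (f : X → X) : Prop :=
  ∀ ε : ℝ, 0 < ε → ∃ m : ℕ, ∀ (k : ℕ) (a b : Fin k → ℕ) (x : Fin k → X),
    (∀ j, a j ≤ b j) →
    (∀ (j : Fin k) (hj : (j : ℕ) + 1 < k), b j + m ≤ a ⟨(j : ℕ) + 1, hj⟩) →
    ∃ y : X, ∀ j : Fin k, ∀ p : ℕ, p ≤ b j - a j →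
      dist (f^[p + a j] y) (f^[p] (x j)) < ε

/-- Bowen's (periodic) specification property. -/
def BowenSpecificationProperty (f : X → X) : Prop :=
  ∀ ε : ℝ, 0 < ε → ∃ m : ℕ, ∀ (k : ℕ) (hk : 0 < k) (a b : Fin k → ℕ) (x : Fin k → X),
    (∀ j, a j ≤ b j) →
    (∀ (j : Fin k) (hj : (j : ℕ) + 1 < k), b j + m ≤ a ⟨(j : ℕ) + 1, hj⟩) →
    ∀ p : ℕ, b ⟨k - 1, Nat.sub_lt hk Nat.one_pos⟩ - a ⟨0, hk⟩ + m ≤ p →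
      ∃ y : X, Function.IsPeriodicPt f p y ∧ Function.minimalPeriod f y = p ∧
        ∀ j : Fin k, ∀ q : ℕ, q ≤ b j - a j →
          dist (f^[q + a j] y) (f^[q] (x j)) < ε

/-- The level set `X(φ, α)` of points whose Birkhoff average of `φ` equals `α`. -/
def levelSet (f : X → X) (φ : X → ℝ) (α : ℝ) : Set X :=
  {x | Tendsto (fun n : ℕ => birkhoffSum f φ n x / n) atTop (𝓝 α)}

/-- The multifractal spectrum `L_φ`. -/
def birkhoffSpectrum (f : X → X) (φ : X → ℝ) : Set ℝ :=
  {α : ℝ | (levelSet f φ α).Nonempty}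

/-- The level set for ratios of Birkhoff sums. -/
def ratioLevelSet (f : X → X) (φ ρ : X → ℝ) (α : ℝ) : Set X :=
  {x | Tendsto (fun n : ℕ => birkhoffSum f φ n x / birkhoffSum f ρ n x) atTop (𝓝 α)}

/-- Supremum of the `n`-th Birkhoff sum of `ψ` over the Bowen ball `B_n(x,ε)`. -/
noncomputable def ballSup (f : X → X) (ψ : X → ℝ) (ε : ℝ) (n : ℕ) (x : X) : ℝ :=
  sSup (birkhoffSum f ψ n '' bowenBall f ε n x)

/-- The quantity `Q(Z, α, Γ, ψ)` associated to a collection `Γ` of Bowen balls,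
recorded as a set of pairs (centre, length). -/
noncomputable def coverSum (f : X → X) (ψ : X → ℝ) (ε α : ℝ) (Γ : Set (X × ℕ)) : ℝ≥0∞ :=
  ∑' p : Γ, ENNReal.ofReal (Real.exp (-α * (p.1.2 : ℝ) + ballSup f ψ ε p.1.2 p.1.1))

/-- `M(Z, α, ε, N, ψ)`: infimum of `Q` over countable collections of Bowen balls of length
at least `N` covering `Z`. -/
noncomputable def pressureM (f : X → X) (ψ : X → ℝ) (Z : Set X) (α ε : ℝ) (N : ℕ) : ℝ≥0∞ :=
  ⨅ (Γ : Set (X × ℕ)) (_ : Γ.Countable) (_ : ∀ p ∈ Γ, N ≤ p.2)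
    (_ : Z ⊆ ⋃ p ∈ Γ, bowenBall f ε p.2 p.1), coverSum f ψ ε α Γ

/-- `m(Z, α, ε, ψ) = lim_{N → ∞} M(Z, α, ε, N, ψ)`; the limit of the nondecreasing
sequence `N ↦ M(Z, α, ε, N, ψ)` is its supremum. -/
noncomputable def pressureOuter (f : X → X) (ψ : X → ℝ) (Z : Set X) (α ε : ℝ) : ℝ≥0∞ :=
  ⨆ N : ℕ, pressureM f ψ Z α ε N

/-- The Pesin–Pitskel topological pressure of `ψ` on `Z` at scale `ε`:
`P_Z(ψ, ε) = inf {α : m(Z, α, ε, ψ) = 0}`. -/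
noncomputable def pressureEps (f : X → X) (ψ : X → ℝ) (Z : Set X) (ε : ℝ) : ℝ :=
  sInf {α : ℝ | pressureOuter f ψ Z α ε = 0}

/-- The Pesin–Pitskel topological pressure of `ψ` on `Z`: the limit of `P_Z(ψ, ε)`
as `ε → 0⁺` (realised as a `limsup` along `𝓝[>] 0`). -/
noncomputable def topPressure (f : X → X) (ψ : X → ℝ) (Z : Set X) : ℝ :=
  limsup (fun ε : ℝ => pressureEps f ψ Z ε) (𝓝[>] 0)

/-- `S` is an `(n, ε)`-spanning subset of `Z`. -/
def IsSpanningSetOf (f : X → X) (Z : Set X) (n : ℕ) (ε : ℝ) (S : Finset X) : Prop :=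
  ↑S ⊆ Z ∧ ∀ z ∈ Z, ∃ x ∈ S, ∀ i < n, dist (f^[i] x) (f^[i] z) ≤ ε

/-- `S` is an `(n, ε)`-separated set. -/
def IsSeparatedSet (f : X → X) (n : ℕ) (ε : ℝ) (S : Finset X) : Prop :=
  ∀ x ∈ S, ∀ y ∈ S, x ≠ y → ∃ i < n, ε < dist (f^[i] x) (f^[i] y)

/-- `Q_n(Z, ψ, ε)`: the infimum of `∑_{x ∈ S} exp(S_n ψ(x))` over `(n,ε)`-spanning
subsets `S` of `Z`. -/
noncomputable def spanningQ (f : X → X) (ψ : X → ℝ) (Z : Set X) (n : ℕ) (ε : ℝ) : ℝ :=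
  sInf {r : ℝ | ∃ S : Finset X, IsSpanningSetOf f Z n ε S ∧
    r = ∑ x ∈ S, Real.exp (birkhoffSum f ψ n x)}

/-- The lower capacity pressure at scale `ε`. -/
noncomputable def lowerCapPressureEps (f : X → X) (ψ : X → ℝ) (Z : Set X) (ε : ℝ) : ℝ :=
  atTop.liminf fun n : ℕ => Real.log (spanningQ f ψ Z n ε) / n

/-- The lower capacity pressure `CP̲_Z(ψ)`. -/
noncomputable def lowerCapPressure (f : X → X) (ψ : X → ℝ) (Z : Set X) : ℝ :=
  limsup (fun ε : ℝ => lowerCapPressureEps f ψ Z ε) (𝓝[>] 0)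

end CommonDefs

section EntropyDefs

variable {X : Type*} [MeasurableSpace X]

/-- Static entropy of a finite collection of sets. -/
noncomputable def partitionEntropy (μ : Measure X) (P : Finset (Set X)) : ℝ :=
  ∑ A ∈ P, Real.negMulLog (μ A).toReal

/-- The join `⋁_{i=0}^{n-1} f^{-i} P` of a finite partition under iterates of `f`. -/
noncomputable def partitionJoin {Y : Type*} (f : Y → Y) (P : Finset (Set Y)) (n : ℕ) :
    Finset (Set Y) :=
  letI := Classical.decEq (Set Y)
  Finset.image
    (fun g : Fin n → {A // A ∈ P} => ⋂ i : Fin n, f^[(i : ℕ)] ⁻¹' ((g i : Set Y)))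
    Finset.univ

/-- The dynamical entropy of `f` with respect to `μ` and a partition `P`. -/
noncomputable def entropyOfPartition (f : X → X) (μ : Measure X) (P : Finset (Set X)) : ℝ :=
  atTop.liminf fun n : ℕ => partitionEntropy μ (partitionJoin f P n) / n

/-- `P` is a finite partition of `X` into measurable sets. -/
def IsMeasPartition (P : Finset (Set X)) : Prop :=
  (∀ A ∈ P, MeasurableSet A) ∧ (⋃ A ∈ P, A) = Set.univ ∧
    (P : Set (Set X)).Pairwise fun A B => Disjoint A B

/-- Measure-theoretic (Kolmogorov–Sinai) entropy `h_μ(f)`: the supremum of dynamical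
entropies over finite measurable partitions. -/
noncomputable def measEntropy (f : X → X) (μ : Measure X) : ℝ :=
  sSup {h : ℝ | ∃ P : Finset (Set X), IsMeasPartition P ∧ h = entropyOfPartition f μ P}

end EntropyDefs

/-!
By the strong law of large numbers, the Birkhoff sums `S_n φ` at the points of a long enough
`μ`-random sample average to about `n ∫ φ dμ`; gluing the orbit segments of the sample by
specification gives one orbit segment along which the Birkhoff averages of finitely many
observables are close to their integrals. In stage `k` such a segment, good up to `1 / (k + 1)`
for the first `k + 1` functions of a dense sequence in `C(X, ℝ)`, is repeated so often that the
stage outweighs everything before it and the next segment. Gluing all stages with summable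
precisions (the limit point exists by compactness) gives a point whose Birkhoff averages converge
along the dense sequence. The observables for which they converge to the integral form a closed
set, since both sides are `1`-Lipschitz in the observable.
-/

open Finset Function Asymptotics

/-- Block `k` occupies `[blockStart ℓ g k, blockStart ℓ g k + ℓ k)` and is followed by a gap of
length `g k`. -/
def blockStart (ℓ g : ℕ → ℕ) (k : ℕ) : ℕ :=
  ∑ i ∈ range k, (ℓ i + g i)

theorem blockStart_succ (ℓ g : ℕ → ℕ) (k : ℕ) :
    blockStart ℓ g (k + 1) = blockStart ℓ g k + ℓ k + g k := by
  simp [blockStart, sum_range_succ, add_assoc]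

theorem blockStart_add_le_of_lt (ℓ g : ℕ → ℕ) {k K : ℕ} (h : k < K) :
    blockStart ℓ g k + ℓ k ≤ blockStart ℓ g K := by
  induction K, h using Nat.le_induction with
  | base => rw [blockStart_succ]; omega
  | succ K _ ih => rw [blockStart_succ]; omega

theorem exists_antitone_pos_le (r : ℕ → ℝ) (hr : ∀ k, 0 < r k) :
    ∃ ρ : ℕ → ℝ, Antitone ρ ∧ (∀ k, 0 < ρ k) ∧ ∀ k, ρ k ≤ r k :=
  ⟨fun k => (range (k + 1)).inf' nonempty_range_add_one r,
    fun _ _ hkK => inf'_mono _ (range_subset_range.2 (by omega)) _,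
    fun _ => (lt_inf'_iff _).2 fun i _ => hr i, fun k => inf'_le r (self_mem_range_succ k)⟩

section Specification

variable {X : Type*} [MetricSpace X] {f : X → X}

theorem SpecificationProperty.exists_iterate_mem_bowenBall (hspec : SpecificationProperty f)
    {ε : ℝ} (hε : 0 < ε) :
    ∃ m : ℕ, ∀ (k : ℕ) (a n : Fin k → ℕ) (x : Fin k → X),
      (∀ (j : Fin k) (hj : (j : ℕ) + 1 < k), a j + n j + m ≤ a ⟨j + 1, hj⟩) →
      ∃ y, ∀ j, f^[a j] y ∈ bowenBall f ε (n j) (x j) := by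
  obtain ⟨m, hm⟩ := hspec ε hε
  refine ⟨m, fun k a n x hgap => ?_⟩
  -- for `n j = 0` the truncated `n j - 1` gives a harmless one-point interval
  obtain ⟨y, hy⟩ := hm k a (fun j => a j + (n j - 1)) x (fun j => by omega)
    (fun j hj => by have := hgap j hj; omega)
  refine ⟨y, fun j p hp => ?_⟩
  rw [dist_comm, ← iterate_add_apply]
  exact hy j p (by omega)

theorem SpecificationProperty.exists_mem_bowenBall_and_iterate_mem_bowenBall
    (hspec : SpecificationProperty f) {ε : ℝ} (hε : 0 < ε) :
    ∃ m : ℕ, ∀ (a b n : ℕ) (x₁ x₂ : X), a + m ≤ b →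
      ∃ y, y ∈ bowenBall f ε a x₁ ∧ f^[b] y ∈ bowenBall f ε n x₂ := by
  obtain ⟨m, hm⟩ := hspec.exists_iterate_mem_bowenBall hε
  refine ⟨m, fun a b n x₁ x₂ hab => ?_⟩
  obtain ⟨y, hy⟩ := hm 2 ![0, b] ![a, n] ![x₁, x₂] fun j hj => by
    obtain rfl : j = 0 := by ext; simp at hj ⊢; omega
    simpa using hab
  exact ⟨y, hy 0, hy 1⟩

theorem SpecificationProperty.exists_iterate_mul_mem_bowenBall
    (hspec : SpecificationProperty f) {ε : ℝ} (hε : 0 < ε) :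
    ∃ m : ℕ, ∀ (n q : ℕ) (z : ℕ → X), ∃ y, ∀ r < q,
      f^[r * (n + m)] y ∈ bowenBall f ε n (z r) := by
  obtain ⟨m, hm⟩ := hspec.exists_iterate_mem_bowenBall hε
  refine ⟨m, fun n q z => ?_⟩
  obtain ⟨y, hy⟩ := hm q (fun r => r * (n + m)) (fun _ => n) (fun r => z r) fun j hj => by
    simp only; ring_nf; omega
  exact ⟨y, fun r hr => hy ⟨r, hr⟩⟩

theorem exists_forall_dist_iterate_le_of_forall_exists [CompactSpace X] (hf : Continuous f)
    {s ℓ : ℕ → ℕ} {w : ℕ → X} {ρ : ℕ → ℝ}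
    (h : ∀ K, ∃ y, ∀ k ≤ K, ∀ p < ℓ k, dist (f^[p] (w k)) (f^[p] (f^[s k] y)) ≤ ρ k) :
    ∃ x, ∀ k, ∀ p < ℓ k, dist (f^[p] (w k)) (f^[p] (f^[s k] x)) ≤ ρ k := by
  set A : ℕ → Set X := fun K =>
    {x | ∀ k ≤ K, ∀ p < ℓ k, dist (f^[p] (w k)) (f^[p] (f^[s k] x)) ≤ ρ k}
  have hA : ∀ K, IsClosed (A K) := fun K => by
    simp only [A, ofPred_forall]
    exact isClosed_iInter fun k => isClosed_iInter fun _ => isClosed_iInter fun p =>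
      isClosed_iInter fun _ => isClosed_le
        (continuous_const.dist ((hf.iterate p).comp (hf.iterate (s k)))) continuous_const
  obtain ⟨x, hx⟩ := (hA 0).isCompact.nonempty_iInter_of_sequence_nonempty_isCompact_isClosed
    A (fun K x hx k hk => hx k (by omega)) h hA
  exact ⟨x, fun k => mem_iInter.1 hx k k le_rfl⟩

/-- Gluing block `K + 1` (at precision `ε (K + 1)`, after a gap `m (K + 1)`) onto a point that
shadows blocks `0, …, K` moves those blocks by less than `ε (K + 1)`. -/
theorem exists_forall_dist_iterate_blockStart_le_sum {ε : ℕ → ℝ} (hε : ∀ K, 0 < ε K)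
    {m : ℕ → ℕ} (hm : ∀ K a b n (x₁ x₂ : X), a + m K ≤ b →
      ∃ y, y ∈ bowenBall f (ε K) a x₁ ∧ f^[b] y ∈ bowenBall f (ε K) n x₂)
    (ℓ : ℕ → ℕ) (w : ℕ → X) (K : ℕ) :
    ∃ y, ∀ k ≤ K, ∀ p < ℓ k, dist (f^[p] (w k))
      (f^[p] (f^[blockStart ℓ (fun k => m (k + 1)) k] y)) ≤ ∑ l ∈ Icc k K, ε l := by
  set s := blockStart ℓ (fun k => m (k + 1))
  induction K with
  | zero =>
    refine ⟨w 0, fun k hk p _ => ?_⟩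
    obtain rfl : k = 0 := by omega
    simp [s, blockStart, (hε 0).le]
  | succ K ih =>
    obtain ⟨y, hy⟩ := ih
    obtain ⟨y', hy'y, hy'w⟩ := hm (K + 1) (s K + ℓ K) (s (K + 1)) (ℓ (K + 1)) y (w (K + 1))
      (blockStart_succ _ _ K).ge
    refine ⟨y', fun k hk p hp => ?_⟩
    rcases hk.lt_or_eq with hk | rfl
    · have hi : s k + p < s K + ℓ K := by
        rcases (Nat.lt_succ_iff.1 hk).lt_or_eq with hk | rfl
        · have : s k + ℓ k ≤ s K := blockStart_add_le_of_lt _ _ hk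
          omega
        · omega
      have h1 := hy'y (s k + p) hi
      rw [add_comm, iterate_add_apply, iterate_add_apply] at h1
      rw [sum_Icc_succ_top (by omega)]
      linarith [hy k (by omega) p hp,
        dist_triangle (f^[p] (w k)) (f^[p] (f^[s k] y)) (f^[p] (f^[s k] y'))]
    · simpa using (hy'w p hp).le

theorem sum_Icc_div_two_pow_le {ρ : ℕ → ℝ} (hρ : ∀ k, 0 < ρ k) (hρ' : Antitone ρ)
    (k K : ℕ) :
    ∑ l ∈ Icc k K, ρ l / 2 ^ (l + 2) ≤ ρ k / 2 :=
  calc ∑ l ∈ Icc k K, ρ l / 2 ^ (l + 2)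
      ≤ ∑ l ∈ Icc k K, ρ k / 4 * (1 / 2) ^ l := sum_le_sum fun l hl => by
        rw [pow_add, div_pow, one_pow, mul_one_div, div_div, mul_comm]
        gcongr
        exacts [(hρ k).le, hρ' (mem_Icc.1 hl).1, by norm_num]
    _ ≤ ∑ l ∈ range (K + 1), ρ k / 4 * (1 / 2) ^ l :=
        sum_le_sum_of_subset_of_nonneg (fun l hl => mem_range.2 (by simp at hl; omega))
          fun l _ _ => by have := hρ k; positivity
    _ ≤ ρ k / 2 := by
        rw [← mul_sum]
        nlinarith [sum_geometric_two_le (K + 1), hρ k]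

theorem SpecificationProperty.exists_iterate_blockStart_mem_bowenBall [CompactSpace X]
    (hf : Continuous f) (hspec : SpecificationProperty f) {ρ : ℕ → ℝ} (hρ : ∀ k, 0 < ρ k)
    (hρ' : Antitone ρ) :
    ∃ g : ℕ → ℕ, ∀ (ℓ : ℕ → ℕ) (w : ℕ → X), ∃ x, ∀ k,
      f^[blockStart ℓ g k] x ∈ bowenBall f (ρ k) (ℓ k) (w k) := by
  have hε : ∀ K, 0 < ρ K / 2 ^ (K + 2) := fun K => by have := hρ K; positivity
  choose m hm using fun K => hspec.exists_mem_bowenBall_and_iterate_mem_bowenBall (hε K)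
  refine ⟨fun k => m (k + 1), fun ℓ w => ?_⟩
  obtain ⟨x, hx⟩ := exists_forall_dist_iterate_le_of_forall_exists (ρ := fun k => ρ k / 2) hf
    fun K => (exists_forall_dist_iterate_blockStart_le_sum hε hm ℓ w K).imp
      fun y hy k hk p hp => (hy k hk p hp).trans (sum_Icc_div_two_pow_le hρ hρ' k K)
  exact ⟨x, fun k p hp => (hx k p hp).trans_lt (by linarith [hρ k])⟩

end Specification

section BirkhoffSum

variable {α : Type*} {f : α → α} {ψ : α → ℝ}

theorem birkhoffSum_sub_const (f : α → α) (φ : α → ℝ) (c : ℝ) (n : ℕ) (x : α) :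
    birkhoffSum f (fun y => φ y - c) n x = birkhoffSum f φ n x - n * c := by
  simp [birkhoffSum, sum_sub_distrib]

theorem abs_birkhoffSum_le {B : ℝ} (hB : ∀ x, |ψ x| ≤ B) (n : ℕ) (x : α) :
    |birkhoffSum f ψ n x| ≤ n * B :=
  (abs_sum_le_sum_abs _ _).trans <| by
    simpa using sum_le_sum fun p (_ : p ∈ range n) => hB (f^[p] x)

theorem abs_birkhoffSum_sub_birkhoffSum_le {δ : ℝ} {n : ℕ} {y z : α}
    (h : ∀ p < n, |ψ (f^[p] y) - ψ (f^[p] z)| ≤ δ) :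
    |birkhoffSum f ψ n y - birkhoffSum f ψ n z| ≤ n * δ := by
  rw [birkhoffSum, birkhoffSum, ← sum_sub_distrib]
  refine (abs_sum_le_sum_abs _ _).trans ?_
  simpa using sum_le_sum fun p hp => h p (mem_range.1 hp)

theorem abs_birkhoffSum_add_sub_birkhoffSum_le {B δ : ℝ} (hB : ∀ x, |ψ x| ≤ B) {n m : ℕ}
    {y z : α} (h : ∀ p < n, |ψ (f^[p] y) - ψ (f^[p] z)| ≤ δ) :
    |birkhoffSum f ψ (n + m) y - birkhoffSum f ψ n z| ≤ n * δ + m * B := by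
  rw [birkhoffSum_add, add_sub_right_comm]
  exact (abs_add_le _ _).trans
    (add_le_add (abs_birkhoffSum_sub_birkhoffSum_le h) (abs_birkhoffSum_le hB _ _))

theorem abs_birkhoffSum_mul_sub_sum_le {B δ : ℝ} (hB : ∀ x, |ψ x| ≤ B) {n m q : ℕ} {y : α}
    {z : ℕ → α}
    (h : ∀ r < q, ∀ p < n, |ψ (f^[p] (f^[r * (n + m)] y)) - ψ (f^[p] (z r))| ≤ δ) :
    |birkhoffSum f ψ (q * (n + m)) y - ∑ r ∈ range q, birkhoffSum f ψ n (z r)|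
      ≤ q * (n * δ + m * B) := by
  induction q with
  | zero => simp
  | succ q ih =>
    rw [Nat.succ_mul, birkhoffSum_add, sum_range_succ, add_sub_add_comm]
    refine (abs_add_le _ _).trans ?_
    have h1 := ih fun r hr => h r (by omega)
    have h2 := abs_birkhoffSum_add_sub_birkhoffSum_le (m := m) hB (h q (by omega))
    push_cast
    linarith

theorem abs_birkhoffSum_le_of_periods {B η : ℝ} (hB : ∀ x, |ψ x| ≤ B) (hη : 0 ≤ η)
    {y : α} {c R : ℕ} (hper : ∀ r < R, |birkhoffSum f ψ c (f^[r * c] y)| ≤ c * η) :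
    ∀ s ≤ R * c, |birkhoffSum f ψ s y| ≤ s * η + c * B := by
  have hfull : ∀ r ≤ R, |birkhoffSum f ψ (r * c) y| ≤ r * c * η := by
    intro r hr
    induction r with
    | zero => simp
    | succ r ih =>
      rw [Nat.succ_mul, birkhoffSum_add]
      have := hper r (by omega)
      have := ih (by omega)
      push_cast
      linarith [abs_add_le (birkhoffSum f ψ (r * c) y) (birkhoffSum f ψ c (f^[r * c] y))]
  intro s hs
  rcases Nat.eq_zero_or_pos c with rfl | hc
  · simp_all
  obtain ⟨r, u, hu, rfl⟩ : ∃ r u, u < c ∧ s = r * c + u :=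
    ⟨s / c, s % c, Nat.mod_lt _ hc, by rw [mul_comm]; exact (Nat.div_add_mod s c).symm⟩
  have hr : r ≤ R := by
    by_contra h
    have : (R + 1) * c ≤ r * c := Nat.mul_le_mul_right _ (by omega)
    rw [add_one_mul] at this
    omega
  have huB : u * B ≤ c * B := by
    have := (abs_nonneg _).trans (hB y)
    gcongr
  rw [birkhoffSum_add]
  have := abs_add_le (birkhoffSum f ψ (r * c) y) (birkhoffSum f ψ u (f^[r * c] y))
  have := abs_birkhoffSum_le (f := f) hB u (f^[r * c] y)
  have := hfull r hr
  push_cast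
  nlinarith

theorem isLittleO_birkhoffSum_of_blocks {x : α} {t : ℕ → ℕ} {θ : ℕ → ℝ} (ht0 : t 0 = 0)
    (ht : StrictMono t) (hθ : Tendsto θ atTop (𝓝 0))
    (hblock : ∀ᶠ k in atTop,
      |birkhoffSum f ψ (t (k + 1) - t k) (f^[t k] x)| ≤ θ k * (t (k + 1) - t k : ℕ)) :
    (fun k => birkhoffSum f ψ (t k) x) =o[atTop] fun k => (t k : ℝ) := by
  have hsum : ∀ k, birkhoffSum f ψ (t k) x
      = ∑ i ∈ range k, birkhoffSum f ψ (t (i + 1) - t i) (f^[t i] x) := by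
    intro k
    induction k with
    | zero => simp [ht0]
    | succ k ih =>
      rw [sum_range_succ, ← ih, ← birkhoffSum_add, Nat.add_sub_of_le (ht.monotone k.le_succ)]
  have hlen : ∀ k, ∑ i ∈ range k, ((t (i + 1) - t i : ℕ) : ℝ) = t k := by
    intro k
    induction k with
    | zero => simp [ht0]
    | succ k ih => rw [sum_range_succ, ih, Nat.cast_sub (ht.monotone k.le_succ)]; ring
  have hθo : (fun k => θ k * (t (k + 1) - t k : ℕ))
      =o[atTop] fun k => ((t (k + 1) - t k : ℕ) : ℝ) := by
    simpa using ((isLittleO_one_iff ℝ).2 hθ).mul_isBigO (isBigO_refl _ atTop)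
  have hblocko : (fun k => birkhoffSum f ψ (t (k + 1) - t k) (f^[t k] x))
      =o[atTop] fun k => ((t (k + 1) - t k : ℕ) : ℝ) :=
    (IsBigO.of_bound 1 (hblock.mono fun k hk => by
      rw [one_mul, Real.norm_eq_abs, Real.norm_eq_abs]
      exact hk.trans (le_abs_self _))).trans_isLittleO hθo
  have := hblocko.sum_range (fun k => Nat.cast_nonneg _) (by
    simp only [hlen]; exact tendsto_natCast_atTop_atTop.comp ht.tendsto_atTop)
  simpa only [← hsum, hlen] using this

theorem StrictMono.eventually_exists_mem_Ico {t : ℕ → ℕ} (ht : StrictMono t) (ht0 : t 0 = 0)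
    {P : ℕ → Prop} (hP : ∀ᶠ k in atTop, P k) :
    ∀ᶠ n in atTop, ∃ k, P k ∧ n ∈ Set.Ico (t k) (t (k + 1)) := by
  obtain ⟨K, hK⟩ := eventually_atTop.1 hP
  filter_upwards [eventually_ge_atTop (t K)] with n hn
  set k := Nat.findGreatest (fun k => t k ≤ n) n
  have hkn : t k ≤ n :=
    Nat.findGreatest_spec (P := fun k => t k ≤ n) (Nat.zero_le n) (by simp [ht0])
  refine ⟨k, hK k (Nat.le_findGreatest ((ht.id_le K).trans hn) hn), hkn, ?_⟩
  by_contra h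
  by_cases h' : k + 1 ≤ n
  · exact Nat.findGreatest_is_greatest (Nat.lt_succ_self _) h' (not_lt.1 h)
  · have : k + 1 ≤ t (k + 1) := ht.id_le _
    omega

/-- The stage bound is relative both to the stage length, so that it sums up over the stages,
and to the time `t k` already elapsed, so that it is uniform inside a stage. -/
theorem tendsto_birkhoffSum_div_of_stages {x : α} {t : ℕ → ℕ} {θ : ℕ → ℝ} (ht0 : t 0 = 0)
    (ht : StrictMono t) (hθ : Tendsto θ atTop (𝓝 0))
    (hstage : ∀ᶠ k in atTop, ∀ s ≤ t (k + 1) - t k,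
      |birkhoffSum f ψ s (f^[t k] x)| ≤ θ k * (s + min (t (k + 1) - t k) (t k))) :
    Tendsto (fun n => birkhoffSum f ψ n x / n) atTop (𝓝 0) := by
  have hblock : ∀ᶠ k in atTop, |birkhoffSum f ψ (t (k + 1) - t k) (f^[t k] x)|
      ≤ 2 * |θ k| * (t (k + 1) - t k : ℕ) :=
    hstage.mono fun k hk => (hk _ le_rfl).trans <| by
    have : ((min (t (k + 1) - t k) (t k) : ℕ) : ℝ) ≤ (t (k + 1) - t k : ℕ) := by
      exact_mod_cast min_le_left _ _
    nlinarith [mul_le_mul_of_nonneg_right (le_abs_self (θ k))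
      (by positivity : (0 : ℝ) ≤ (t (k + 1) - t k : ℕ) + (min (t (k + 1) - t k) (t k) : ℕ)),
      mul_le_mul_of_nonneg_left this (abs_nonneg (θ k))]
  have hF := (isLittleO_birkhoffSum_of_blocks ht0 ht (θ := fun k => 2 * |θ k|)
    (by simpa using hθ.abs.const_mul 2) hblock).norm_left.tendsto_div_nhds_zero.add hθ.abs
  rw [zero_add, abs_zero] at hF
  rw [Metric.tendsto_nhds]
  intro ε hε
  filter_upwards [ht.eventually_exists_mem_Ico ht0 (((Metric.tendsto_nhds.1 hF) ε hε).and
    (hstage.and (eventually_ge_atTop 1)))] with n ⟨k, ⟨hGk, hk, hk1⟩, hkn, hnk⟩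
  have htk : (0 : ℝ) < t k := by exact_mod_cast ht0 ▸ ht (by omega : 0 < k)
  have hnk' : (t k : ℝ) ≤ n := by exact_mod_cast hkn
  have hmin : ((n - t k : ℕ) : ℝ) + (min (t (k + 1) - t k) (t k) : ℕ) ≤ n := by
    have := min_le_right (t (k + 1) - t k) (t k)
    exact_mod_cast (by omega : n - t k + min (t (k + 1) - t k) (t k) ≤ n)
  have hS : |birkhoffSum f ψ n x| ≤ ‖birkhoffSum f ψ (t k) x‖ + |θ k| * n := by
    rw [← Nat.add_sub_of_le hkn, birkhoffSum_add, Nat.add_sub_of_le hkn]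
    refine (abs_add_le _ _).trans (add_le_add le_rfl ((hk _ (by omega)).trans ?_))
    exact (mul_le_mul_of_nonneg_right (le_abs_self _) (by positivity)).trans
      (mul_le_mul_of_nonneg_left hmin (abs_nonneg _))
  rw [Real.dist_eq, sub_zero, abs_div, Nat.abs_cast]
  calc |birkhoffSum f ψ n x| / n ≤ (‖birkhoffSum f ψ (t k) x‖ + |θ k| * n) / n := by gcongr
    _ = ‖birkhoffSum f ψ (t k) x‖ / n + |θ k| := by
        rw [add_div, mul_div_cancel_right₀ _ (htk.trans_le hnk').ne']
    _ ≤ ‖birkhoffSum f ψ (t k) x‖ / t k + |θ k| := by gcongr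
    _ < ε := (le_abs_self _).trans_lt (by simpa [Real.dist_eq] using hGk)

end BirkhoffSum

section Measure

variable {X : Type*} [MeasurableSpace X]

theorem exists_seq_tendsto_average_integral (μ : Measure X) [IsProbabilityMeasure μ]
    {ι : Type*} [Countable ι] (φ : ι → X → ℝ) (hmeas : ∀ i, Measurable (φ i))
    (hint : ∀ i, Integrable (φ i) μ) :
    ∃ x : ℕ → X, ∀ i, Tendsto (fun q : ℕ => (∑ t ∈ range q, φ i (x t)) / q) atTop
      (𝓝 (∫ y, φ i y ∂μ)) := by
  obtain ⟨Ω, _, P, Y, hY, hlaw, hindep, _⟩ := ProbabilityTheory.exists_iid ℕ μ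
  have hlln : ∀ i, ∀ᵐ ω ∂P, Tendsto (fun q : ℕ => (∑ t ∈ range q, φ i (Y t ω)) / q) atTop
      (𝓝 (∫ y, φ i y ∂μ)) := by
    intro i
    rw [← (hlaw 0).integral_comp (hmeas i).aestronglyMeasurable]
    exact ProbabilityTheory.strong_law_ae_real (fun t => φ i ∘ Y t)
      (((hlaw 0).measurePreserving (hY 0)).integrable_comp_of_integrable (hint i))
      (fun s t hst => (hindep.comp (fun _ => φ i) fun _ => hmeas i).indepFun hst)
      (fun t => ((hlaw t).identDistrib (hlaw 0)).comp (hmeas i))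
  obtain ⟨ω, hω⟩ := (ae_all_iff.2 hlln).exists
  exact ⟨fun t => Y t ω, hω⟩

theorem exists_abs_sum_sub_integral_le (μ : Measure X) [IsProbabilityMeasure μ]
    {ι : Type*} [Finite ι] (φ : ι → X → ℝ) (hmeas : ∀ i, Measurable (φ i))
    (hint : ∀ i, Integrable (φ i) μ) {δ : ℝ} (hδ : 0 < δ) :
    ∃ q > 0, ∃ x : ℕ → X, ∀ i, |∑ t ∈ range q, φ i (x t) - q * ∫ y, φ i y ∂μ| ≤ q * δ := by
  obtain ⟨x, hx⟩ := exists_seq_tendsto_average_integral μ φ hmeas hint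
  obtain ⟨q, hq, hq0⟩ := ((eventually_all.2 fun i => Metric.tendsto_nhds.1 (hx i) δ hδ).and
    (eventually_gt_atTop 0)).exists
  refine ⟨q, hq0, x, fun i => ?_⟩
  have hq0' : (0 : ℝ) < q := by exact_mod_cast hq0
  rw [← mul_div_cancel₀ (∑ t ∈ range q, φ i (x t)) hq0'.ne', ← mul_sub, abs_mul,
    abs_of_pos hq0']
  exact mul_le_mul_of_nonneg_left (hq i).le hq0'.le

theorem MeasureTheory.MeasurePreserving.integral_birkhoffSum {f : X → X} {μ : Measure X}
    (hμ : MeasurePreserving f μ μ) {φ : X → ℝ} (hφ : Integrable φ μ) (n : ℕ) :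
    ∫ x, birkhoffSum f φ n x ∂μ = n * ∫ x, φ x ∂μ := by
  have hcomp : ∀ k, ∫ x, φ (f^[k] x) ∂μ = ∫ x, φ x ∂μ := fun k => by
    have h := integral_map (μ := μ) (hμ.iterate k).aemeasurable
      (by rw [(hμ.iterate k).map_eq]; exact hφ.aestronglyMeasurable)
    rwa [(hμ.iterate k).map_eq, eq_comm] at h
  simp only [birkhoffSum]
  rw [integral_finsetSum (range n) (f := fun k x => φ (f^[k] x))
    fun k _ => (hμ.iterate k).integrable_comp_of_integrable hφ]
  simp [hcomp]

end Measure

section Metric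

variable {X : Type*} [MetricSpace X] {f : X → X}

theorem exists_pos_forall_dist_lt_abs_sub_le [CompactSpace X] {ι : Type*} [Finite ι]
    (φ : ι → C(X, ℝ)) {δ : ℝ} (hδ : 0 < δ) :
    ∃ r > 0, ∀ i u v, dist u v < r → |φ i u - φ i v| ≤ δ := by
  obtain ⟨r, hr, h⟩ := Metric.uniformEquicontinuous_iff.1 (uniformEquicontinuous_finite.2
    fun i => CompactSpace.uniformContinuous_of_continuous (φ i).continuous) δ hδ
  exact ⟨r, hr, fun i u v huv => (h u v huv i).le⟩

theorem abs_sub_le_of_mem_bowenBall {ψ : X → ℝ} {r δ : ℝ}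
    (hmod : ∀ u v, dist u v < r → |ψ u - ψ v| ≤ δ) {n : ℕ} {y z : X}
    (hy : y ∈ bowenBall f r n z) : ∀ p < n, |ψ (f^[p] y) - ψ (f^[p] z)| ≤ δ :=
  fun p hp => hmod _ _ (by rw [dist_comm]; exact hy p hp)

theorem abs_birkhoffSum_le_of_mem_bowenBall {ψ : X → ℝ} {B r δ : ℝ} {ℓ g D M : ℕ}
    (hB : ∀ x, |ψ x| ≤ B) (hmod : ∀ u v, dist u v < r → |ψ u - ψ v| ≤ δ) (hδ : 0 ≤ δ)
    (hδ1 : δ ≤ 1) (hM : (D + g : ℝ) ≤ δ * M) {w y : X}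
    (hw : ∀ s ≤ ℓ, |birkhoffSum f ψ s w| ≤ δ * (s + D)) (hy : y ∈ bowenBall f r ℓ w) :
    ∀ s ≤ ℓ + g, |birkhoffSum f ψ s y| ≤ (2 + B) * δ * (s + M) := by
  intro s hs
  obtain ⟨a, u, ha, hu, rfl⟩ : ∃ a u, a ≤ ℓ ∧ u ≤ g ∧ s = a + u :=
    ⟨min s ℓ, s - min s ℓ, min_le_right _ _, by omega, by omega⟩
  have hB0 : 0 ≤ B := (abs_nonneg _).trans (hB y)
  have hya : |birkhoffSum f ψ a y| ≤ 2 * δ * a + δ * D := by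
    have := abs_birkhoffSum_sub_birkhoffSum_le (f := f) (n := a)
      fun p hp => abs_sub_le_of_mem_bowenBall hmod hy p (by omega)
    linarith [hw a ha, abs_sub_abs_le_abs_sub (birkhoffSum f ψ a y) (birkhoffSum f ψ a w)]
  have hyu : |birkhoffSum f ψ u (f^[a] y)| ≤ B * (δ * M) := by
    have : (u : ℝ) ≤ δ * M := by
      have : (u : ℝ) ≤ g := by exact_mod_cast hu
      linarith [(Nat.cast_nonneg D : (0 : ℝ) ≤ D)]
    nlinarith [abs_birkhoffSum_le (f := f) hB u (f^[a] y)]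
  have hδD : δ * D ≤ δ * M := by
    refine mul_le_mul_of_nonneg_left ?_ hδ
    nlinarith [(Nat.cast_nonneg g : (0 : ℝ) ≤ g), (Nat.cast_nonneg M : (0 : ℝ) ≤ M)]
  have : 0 ≤ 2 * δ * u + B * δ * (a + u) + δ * M := by positivity
  rw [birkhoffSum_add]
  push_cast
  nlinarith [abs_add_le (birkhoffSum f ψ a y) (birkhoffSum f ψ u (f^[a] y))]

end Metric

section Compact

variable {X : Type*} [MetricSpace X] [CompactSpace X] {f : X → X} [MeasurableSpace X]
  {μ : Measure X} [IsProbabilityMeasure μ]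

theorem ContinuousMap.abs_integral_le_norm (φ : C(X, ℝ)) : |∫ x, φ x ∂μ| ≤ ‖φ‖ := by
  simpa using norm_integral_le_of_norm_le_const (μ := μ)
    (Eventually.of_forall fun x => φ.norm_coe_le_norm x)

theorem ContinuousMap.abs_sub_integral_le (φ : C(X, ℝ)) (x : X) :
    |φ x - ∫ x, φ x ∂μ| ≤ 2 * ‖φ‖ := by
  have : |φ x| ≤ ‖φ‖ := φ.norm_coe_le_norm x
  linarith [abs_sub (φ x) (∫ x, φ x ∂μ), φ.abs_integral_le_norm (μ := μ)]

variable [BorelSpace X]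

theorem ContinuousMap.integrable (φ : C(X, ℝ)) : Integrable φ μ :=
  φ.continuous.integrable_of_hasCompactSupport (.of_compactSpace _)

theorem exists_abs_birkhoffSum_sub_integral_le (hspec : SpecificationProperty f)
    (hμ : MeasurePreserving f μ μ) {ι : Type*} [Finite ι] (φ : ι → C(X, ℝ)) {δ : ℝ}
    (hδ : 0 < δ) (N : ℕ) :
    ∃ n ≥ N, ∃ z, ∀ i, |birkhoffSum f (φ i) n z - n * ∫ x, φ i x ∂μ| ≤ n * δ := by
  obtain ⟨B, hB⟩ := Finite.exists_le fun i => ‖φ i‖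
  have hφB : ∀ i x, |φ i x| ≤ B := fun i x => ((φ i).norm_coe_le_norm x).trans (hB i)
  obtain ⟨r, hr, hmod⟩ := exists_pos_forall_dist_lt_abs_sub_le φ (by positivity : 0 < δ / 4)
  obtain ⟨m, hm⟩ := hspec.exists_iterate_mul_mem_bowenBall hr
  obtain ⟨n, hNn, hmn, hn⟩ : ∃ n, N ≤ n ∧ 4 * m * B ≤ n * δ ∧ 0 < n := by
    refine ⟨N + ⌈4 * m * B / δ⌉₊ + 1, by omega, ?_, by omega⟩
    rw [← div_le_iff₀ hδ]
    exact (Nat.le_ceil _).trans (by push_cast; linarith)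
  obtain ⟨q, hq, x, hx⟩ :=
    exists_abs_sum_sub_integral_le μ (fun i => birkhoffSum f (φ i) n)
    (fun i => Finset.measurable_sum _ fun k _ =>
      (φ i).continuous.measurable.comp (hμ.measurable.iterate k))
    (fun i => integrable_finsetSum _ fun k _ =>
      (hμ.iterate k).integrable_comp_of_integrable (φ i).integrable)
    (by positivity : 0 < n * δ / 4)
  obtain ⟨y, hy⟩ := hm n q x
  refine ⟨q * (n + m), hNn.trans (Nat.le_mul_of_pos_left _ hq |>.trans' (by omega)), y,
    fun i => ?_⟩
  set a := ∫ x, φ i x ∂μ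
  have hglue := abs_birkhoffSum_mul_sub_sum_le (hφB i)
    fun r hr => abs_sub_le_of_mem_bowenBall (hmod i) (hy r hr)
  have hsample := hx i
  rw [hμ.integral_birkhoffSum (φ i).integrable] at hsample
  have hgap : |q * (n * a) - (q * (n + m) : ℕ) * a| ≤ q * (m * B) := by
    rw [show q * (n * a) - (q * (n + m) : ℕ) * a = -(q * (m * a)) by push_cast; ring, abs_neg,
      abs_mul, abs_mul, abs_of_nonneg (Nat.cast_nonneg _), abs_of_nonneg (Nat.cast_nonneg _)]
    gcongr
    exact (φ i).abs_integral_le_norm.trans (hB i)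
  have := abs_sub_le (birkhoffSum f (φ i) (q * (n + m)) y)
    (∑ r ∈ range q, birkhoffSum f (φ i) n (x r)) ((q * (n + m) : ℕ) * a)
  have := abs_sub_le (∑ r ∈ range q, birkhoffSum f (φ i) n (x r)) (q * (n * a))
    ((q * (n + m) : ℕ) * a)
  have := mul_le_mul_of_nonneg_left hmn (Nat.cast_nonneg q : (0 : ℝ) ≤ q)
  have : (0 : ℝ) ≤ q * m * δ := by positivity
  push_cast at *
  nlinarith

theorem exists_uniform_abs_birkhoffSum_sub_integral_le (hspec : SpecificationProperty f)
    (hμ : MeasurePreserving f μ μ) {ι : Type*} [Finite ι] (φ : ι → C(X, ℝ)) {δ : ℝ}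
    (hδ : 0 < δ) :
    ∃ D : ℕ, ∀ L : ℕ, ∃ ℓ ≥ L, ∃ w, ∀ i, ∀ s ≤ ℓ,
      |birkhoffSum f (φ i) s w - s * ∫ x, φ i x ∂μ| ≤ δ * (s + D) := by
  obtain ⟨B, hB⟩ := Finite.exists_le fun i => ‖φ i‖
  set ψ : ι → X → ℝ := fun i x => φ i x - ∫ x, φ i x ∂μ
  have hψB : ∀ i x, |ψ i x| ≤ 2 * B := fun i x => ((φ i).abs_sub_integral_le x).trans (by
    linarith [hB i])
  obtain ⟨r, hr, hmod⟩ := exists_pos_forall_dist_lt_abs_sub_le φ (by positivity : 0 < δ / 3)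
  obtain ⟨m, hm⟩ := hspec.exists_iterate_mul_mem_bowenBall hr
  obtain ⟨n, hn, z, hz⟩ := exists_abs_birkhoffSum_sub_integral_le hspec hμ φ
    (by positivity : 0 < δ / 3) (⌈6 * m * B / δ⌉₊ + 1)
  have hmn : 2 * m * B ≤ n * δ / 3 := by
    have h1 : (⌈6 * m * B / δ⌉₊ : ℝ) ≤ n := by exact_mod_cast Nat.le_of_succ_le hn
    have := (Nat.le_ceil _).trans h1
    rw [div_le_iff₀ hδ] at this
    linarith
  -- `L` copies of the segment of `z`, spaced by `m`; `D` absorbs an incomplete last period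
  refine ⟨⌈(n + m) * (2 * B) / δ⌉₊, fun L =>
    ⟨L * (n + m), Nat.le_mul_of_pos_right _ (by omega), ?_⟩⟩
  obtain ⟨w, hw⟩ := hm n L fun _ => z
  refine ⟨w, fun i s hs => ?_⟩
  have hperiod : ∀ r < L,
      |birkhoffSum f (ψ i) (n + m) (f^[r * (n + m)] w)| ≤ (n + m : ℕ) * δ := by
    intro r hr
    have h1 := abs_birkhoffSum_add_sub_birkhoffSum_le (m := m) (hψB i)
      (abs_sub_le_of_mem_bowenBall (ψ := ψ i)
        (fun u v huv => by simpa [ψ] using hmod i u v huv) (hw r hr))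
    have h2 := hz i
    rw [← birkhoffSum_sub_const] at h2
    have := abs_sub_abs_le_abs_sub (birkhoffSum f (ψ i) (n + m) (f^[r * (n + m)] w))
      (birkhoffSum f (ψ i) n z)
    push_cast
    nlinarith
  rw [← birkhoffSum_sub_const]
  refine (abs_birkhoffSum_le_of_periods (hψB i) hδ.le hperiod s hs).trans ?_
  have := Nat.le_ceil ((n + m) * (2 * B) / δ)
  rw [div_le_iff₀ hδ] at this
  push_cast
  nlinarith

theorem exists_stagewise_abs_birkhoffSum_le (hf : Continuous f)
    (hspec : SpecificationProperty f) (hμ : MeasurePreserving f μ μ) (ψ : ℕ → C(X, ℝ)) :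
    ∃ x, ∃ t : ℕ → ℕ, t 0 = 0 ∧ StrictMono t ∧ ∀ j, ∀ k ≥ max j 1, ∀ s ≤ t (k + 1) - t k,
      |birkhoffSum f (fun y => ψ j y - ∫ y, ψ j y ∂μ) s (f^[t k] x)|
        ≤ (2 + 2 * ‖ψ j‖) * (1 / (k + 1)) * (s + min (t (k + 1) - t k) (t k)) := by
  have hδ : ∀ k : ℕ, (0 : ℝ) < 1 / (k + 1) := fun k => by positivity
  choose r hr hmod using fun k =>
    exists_pos_forall_dist_lt_abs_sub_le (fun j : Fin (k + 1) => ψ j) (hδ k)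
  obtain ⟨ρ, hρ', hρ, hρr⟩ := exists_antitone_pos_le r hr
  obtain ⟨g, hg⟩ := hspec.exists_iterate_blockStart_mem_bowenBall hf hρ hρ'
  choose D hD using fun k =>
    exists_uniform_abs_birkhoffSum_sub_integral_le hspec hμ (fun j : Fin (k + 1) => ψ j) (hδ k)
  -- stage `k` outweighs the overhead `D + g` of stages `k` and `k + 1` by a factor `k + 2`
  choose ℓ hℓ w hw using fun k => hD k ((k + 2) * (D k + g k + D (k + 1) + g (k + 1) + 1))
  obtain ⟨x, hx⟩ := hg ℓ w
  set t := blockStart ℓ g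
  have ht : ∀ k, t (k + 1) - t k = ℓ k + g k := fun k => by
    have : t (k + 1) = t k + ℓ k + g k := blockStart_succ ℓ g k
    omega
  refine ⟨x, t, by simp [t, blockStart], strictMono_nat_of_lt_succ fun k => ?_,
    fun j k hk s hs => ?_⟩
  · have := hℓ k
    have := ht k
    have : 0 < (k + 2) * (D k + g k + D (k + 1) + g (k + 1) + 1) := by positivity
    omega
  have hM : (k + 1) * (D k + g k) ≤ min (ℓ k + g k) (t k) := by
    obtain ⟨k, rfl⟩ : ∃ k', k = k' + 1 := ⟨k - 1, by omega⟩
    have := hℓ (k + 1)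
    have := hℓ k
    have : ℓ k ≤ t (k + 1) := by have := ht k; omega
    refine le_min ?_ ?_ <;> nlinarith
  rw [ht] at hs ⊢
  have hjk : j < k + 1 := by omega
  refine abs_birkhoffSum_le_of_mem_bowenBall (fun y => (ψ j).abs_sub_integral_le y)
    (fun u v huv => by simpa using hmod k ⟨j, hjk⟩ u v huv) (hδ k).le
    ((div_le_one (by positivity)).2 (by linarith [k.cast_nonneg (α := ℝ)])) ?_
    (fun s hs => by rw [birkhoffSum_sub_const]; exact hw k ⟨j, hjk⟩ s hs)
    (fun p hp => (hx k p hp).trans_le (hρr k)) s hs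
  rw [one_div_mul_eq_div, le_div_iff₀ (by positivity), mul_comm]
  exact_mod_cast hM

theorem exists_forall_tendsto_birkhoffSum_div (hf : Continuous f)
    (hspec : SpecificationProperty f) (hμ : MeasurePreserving f μ μ) (ψ : ℕ → C(X, ℝ)) :
    ∃ x, ∀ j, Tendsto (fun n => birkhoffSum f (ψ j) n x / n) atTop (𝓝 (∫ y, ψ j y ∂μ)) := by
  obtain ⟨x, t, ht0, ht, hstage⟩ := exists_stagewise_abs_birkhoffSum_le hf hspec hμ ψ
  refine ⟨x, fun j => ?_⟩
  have hθ : Tendsto (fun k : ℕ => (2 + 2 * ‖ψ j‖) * (1 / ((k : ℝ) + 1))) atTop (𝓝 0) := by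
    simpa using tendsto_one_div_add_atTop_nhds_zero_nat.const_mul (2 + 2 * ‖ψ j‖)
  have := (tendsto_birkhoffSum_div_of_stages ht0 ht hθ
    (eventually_atTop.2 ⟨max j 1, hstage j⟩)).add_const (∫ y, ψ j y ∂μ)
  rw [zero_add] at this
  refine this.congr' ((eventually_ne_atTop 0).mono fun n hn => ?_)
  rw [birkhoffSum_sub_const]
  field_simp
  ring

theorem isClosed_setOf_tendsto_birkhoffSum_div (f : X → X) (x : X) :
    IsClosed {φ : C(X, ℝ) | Tendsto (fun n => birkhoffSum f φ n x / n) atTop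
      (𝓝 (∫ y, φ y ∂μ))} := by
  refine Equicontinuous.isClosed_setOfPred_tendsto
    (F := fun n (φ : C(X, ℝ)) => birkhoffSum f φ n x / n) ?_ ?_
  · refine (LipschitzWith.uniformEquicontinuous _ 1 fun n => ?_).equicontinuous
    refine LipschitzWith.of_dist_le_mul fun φ ψ => ?_
    rw [Real.dist_eq, ← sub_div, ← birkhoffSum_sub, abs_div, Nat.abs_cast, NNReal.coe_one,
      one_mul, dist_eq_norm]
    refine div_le_of_le_mul₀ (Nat.cast_nonneg _) (norm_nonneg _) ?_
    rw [mul_comm]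
    exact abs_birkhoffSum_le (fun y => (φ - ψ).norm_coe_le_norm y) n x
  · refine (LipschitzWith.of_dist_le_mul (K := 1) fun φ ψ => ?_).continuous
    rw [Real.dist_eq, ← integral_sub φ.integrable ψ.integrable, NNReal.coe_one, one_mul,
      dist_eq_norm]
    exact (φ - ψ).abs_integral_le_norm

end Compact

/-- For a map with the specification property, every invariant Borel probability measure
(not necessarily ergodic) has a generic point. -/
theorem exists_generic_point_of_specification
    {X : Type*} [MetricSpace X] [CompactSpace X] [MeasurableSpace X] [BorelSpace X]
    (f : X → X) (hf : Continuous f) (hspec : SpecificationProperty f)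
    (μ : Measure X) (hμ : IsProbabilityMeasure μ) (hinv : MeasurePreserving f μ μ) :
    ∃ x : X, ∀ φ : X → ℝ, Continuous φ →
      Tendsto (fun n : ℕ => birkhoffSum f φ n x / n) atTop (𝓝 (∫ y, φ y ∂μ)) := by
  obtain ⟨ψ, hψ⟩ : ∃ ψ : ℕ → C(X, ℝ), DenseRange ψ :=
    ⟨TopologicalSpace.denseSeq _, TopologicalSpace.denseRange_denseSeq _⟩
  obtain ⟨x, hx⟩ := exists_forall_tendsto_birkhoffSum_div hf hspec hinv ψ
  have hall := (isClosed_setOf_tendsto_birkhoffSum_div (μ := μ) f x).closure_subset_iff.2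
    (range_subset_iff.2 hx)
  rw [hψ.closure_range] at hall
  exact ⟨x, fun φ hφ => hall (mem_univ ⟨φ, hφ⟩)⟩
end

section
/- (Generalised pressure distribution principle.) Let (X,d) be a compact metric space, f : X → X continuous, ψ : X → ℝ continuous, and Z ⊂ X an arbitrary Borel set. Suppose there exist ε > 0 and s ≥ 0 such that one can find a sequence of Borel probability measures μ_k on X, a constant K > 0, and a weak* limit measure ν of the sequence (μ_k) with ν(Z) > 0, satisfying limsup_{k→∞} μ_k(B_n(x,ε)) ≤ K exp(−ns + S_nψ(x)) for all sufficiently large n and every Bowen ball B_n(x,ε) with B_n(x,ε) ∩ Z ≠ ∅. Then P_Z(ψ,ε) ≥ s. -/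
open MeasureTheory Filter Topology Set
open scoped ENNReal NNReal

/-! By the portmanteau theorem (Bowen balls are open) the assumed bound passes to the limit:
`ν(B_n(x, ε)) ≤ K exp(-ns + S_nψ(x))` for long Bowen balls meeting `Z`. Summing over an
admissible cover gives the mass distribution estimate `ν(Z) ≤ K M(Z, s, ε, N, ψ) ≤ K m(Z, s, ε, ψ)`,
so `m(Z, s, ε, ψ) > 0`; as `m(Z, α, ε, ψ)` is antitone in `α`, every `α` with `m(Z, α, ε, ψ) = 0`
is at least `s`. Such `α` exist, so the infimum is not the junk value `sInf ∅ = 0`: a compact `X`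
is covered by at most `C ^ n` Bowen balls of length `n`, whence `m(Z, α, ε, ψ) = 0` as soon as
`C exp(sup ψ - α) < 1`. -/

open Dynamics

lemma birkhoffSum_le_mul {α : Type*} {f : α → α} {ψ : α → ℝ} {R : ℝ} (hR : ∀ x, ψ x ≤ R)
    (n : ℕ) (x : α) : birkhoffSum f ψ n x ≤ n * R := by
  simpa [birkhoffSum] using Finset.sum_le_card_nsmul (Finset.range n) _ R fun i _ => hR (f^[i] x)

lemma MeasureTheory.ProbabilityMeasure.measure_le_ofReal_of_limsup_toReal_le {Ω : Type*}
    [MeasurableSpace Ω] [TopologicalSpace Ω] [OpensMeasurableSpace Ω] [HasOuterApproxClosed Ω]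
    {μ : ℕ → ProbabilityMeasure Ω} {ν : ProbabilityMeasure Ω} {ι : ℕ → ℕ} (hι : StrictMono ι)
    (hlim : Tendsto (fun k => μ (ι k)) atTop (𝓝 ν)) {G : Set Ω} (hG : IsOpen G) {c : ℝ}
    (hc : atTop.limsup (fun k => ((μ k : Measure Ω) G).toReal) ≤ c) :
    (ν : Measure Ω) G ≤ ENNReal.ofReal c :=
  calc (ν : Measure Ω) G
      ≤ atTop.liminf (fun k => (μ (ι k) : Measure Ω) G) :=
        ProbabilityMeasure.le_liminf_measure_open_of_tendsto hlim hG
    _ ≤ atTop.limsup (fun k => (μ (ι k) : Measure Ω) G) := liminf_le_limsup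
    _ ≤ atTop.limsup (fun k => (μ k : Measure Ω) G) :=
        hι.tendsto_atTop.limsup_comp_le_limsup (u := fun k => (μ k : Measure Ω) G)
    _ = ENNReal.ofReal (atTop.limsup fun k => ((μ k : Measure Ω) G).toReal) :=
        (ENNReal.ofReal_limsup_toReal (C := 1) <| .of_forall fun _ => by
          simpa using prob_le_one).symm
    _ ≤ ENNReal.ofReal c := ENNReal.ofReal_le_ofReal hc

section BowenBall

variable {X : Type*} [MetricSpace X] {f : X → X} {ε : ℝ}

lemma mem_bowenBall_self (hε : 0 < ε) (n : ℕ) (x : X) : x ∈ bowenBall f ε n x :=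
  fun _ _ => by simpa using hε

lemma isOpen_bowenBall (hf : Continuous f) (n : ℕ) (x : X) :
    IsOpen (bowenBall f ε n x) := by
  have : bowenBall f ε n x = ⋂ i ∈ Finset.range n, {y | dist (f^[i] x) (f^[i] y) < ε} := by
    ext y; simp [bowenBall]
  rw [this]
  exact isOpen_biInter_finset fun i _ =>
    isOpen_lt (continuous_const.dist (hf.iterate i)) continuous_const

theorem exists_bowenBall_cover_card_le_pow [CompactSpace X] (hε : 0 < ε) :
    ∃ C : ℕ, ∀ n, ∃ t : Finset X, t.card ≤ C ^ n ∧ ∀ y, ∃ x ∈ t, y ∈ bowenBall f ε n x := by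
  -- `iterate_le_pow` concatenates time-one covers at the price of composing the entourage.
  obtain ⟨V, hV, _, hVε⟩ :=
    comp_symm_mem_uniformity_sets (Metric.dist_mem_uniformity (α := X) hε)
  obtain ⟨s, hs⟩ :=
    exists_isDynCoverOf_of_isCompact_invariant isCompact_univ (mapsTo_univ f univ) hV 1
  refine ⟨s.card, fun n => ?_⟩
  obtain ⟨t, ht, hcard⟩ := hs.iterate_le_pow (mapsTo_univ f univ) n
  refine ⟨t, hcard, fun y => ?_⟩
  obtain ⟨x, hx, hyx⟩ := ht (mem_univ y)
  refine ⟨x, hx, fun i hi => ?_⟩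
  rw [dist_comm]
  exact hVε (mem_dynEntourage.1 hyx i (by omega))

variable {ψ : X → ℝ}

lemma ballSup_le_mul {R : ℝ} (hR : ∀ x, ψ x ≤ R) (hε : 0 < ε) (n : ℕ) (x : X) :
    ballSup f ψ ε n x ≤ n * R :=
  csSup_le ((nonempty_of_mem (mem_bowenBall_self hε n x)).image _)
    (forall_mem_image.2 fun y _ => birkhoffSum_le_mul hR n y)

lemma birkhoffSum_le_ballSup (hψ : BddAbove (range ψ)) (hε : 0 < ε) (n : ℕ) (x : X) :
    birkhoffSum f ψ n x ≤ ballSup f ψ ε n x := by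
  obtain ⟨R, hR⟩ := hψ
  exact le_csSup ⟨n * R, forall_mem_image.2 fun y _ =>
    birkhoffSum_le_mul (fun z => hR (mem_range_self z)) n y⟩
    (mem_image_of_mem _ (mem_bowenBall_self hε n x))

end BowenBall

section Pressure

variable {X : Type*} [MetricSpace X] {f : X → X} {ψ : X → ℝ} {Z : Set X} {ε : ℝ}

lemma coverSum_anti (Γ : Set (X × ℕ)) : Antitone fun α => coverSum f ψ ε α Γ := fun _ _ h =>
  ENNReal.tsum_le_tsum fun p => ENNReal.ofReal_le_ofReal <| Real.exp_le_exp.2 <| by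
    have : (0 : ℝ) ≤ p.1.2 := Nat.cast_nonneg _
    nlinarith

lemma pressureOuter_anti : Antitone fun α => pressureOuter f ψ Z α ε := fun _ _ h =>
  iSup_mono fun _ => iInf₂_mono fun Γ _ => iInf₂_mono fun _ _ => coverSum_anti Γ h

lemma pressureM_le_coverSum {α : ℝ} {N : ℕ} {Γ : Set (X × ℕ)} (hc : Γ.Countable)
    (hN : ∀ p ∈ Γ, N ≤ p.2) (hcov : Z ⊆ ⋃ p ∈ Γ, bowenBall f ε p.2 p.1) :
    pressureM f ψ Z α ε N ≤ coverSum f ψ ε α Γ :=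
  iInf₂_le_of_le Γ hc <| iInf₂_le hN hcov

lemma coverSum_map_sectL_le {R : ℝ} (hR : ∀ x, ψ x ≤ R) (hε : 0 < ε) (α : ℝ) (n : ℕ)
    (t : Finset X) :
    coverSum f ψ ε α ↑(t.map (.sectL X n)) ≤ ENNReal.ofReal (t.card * Real.exp (R - α) ^ n) := by
  rw [coverSum, Finset.tsum_subtype' (t.map (.sectL X n))
    fun p => ENNReal.ofReal (Real.exp (-α * p.2 + ballSup f ψ ε p.2 p.1))]
  calc _ ≤ (t.map (.sectL X n)).card • ENNReal.ofReal (Real.exp (R - α) ^ n) := by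
        refine Finset.sum_le_card_nsmul _ _ _ fun p hp => ?_
        obtain ⟨x, -, rfl⟩ := Finset.mem_map.1 hp
        rw [Function.Embedding.sectL_apply, ← Real.exp_nat_mul]
        gcongr
        nlinarith [ballSup_le_mul (f := f) hR hε n x]
    _ = _ := by
        rw [Finset.card_map, ENNReal.ofReal_mul (by positivity), ENNReal.ofReal_natCast,
          nsmul_eq_mul]

theorem exists_pressureOuter_eq_zero [CompactSpace X] (hψ : BddAbove (range ψ))
    (hε : 0 < ε) : ∃ α, pressureOuter f ψ Z α ε = 0 := by
  obtain ⟨R, hR⟩ := hψ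
  obtain ⟨C, hC⟩ := exists_bowenBall_cover_card_le_pow (f := f) hε
  have hq : (C : ℝ) * Real.exp (-C) < 1 := by
    rw [Real.exp_neg, ← div_eq_mul_inv, div_lt_one (Real.exp_pos _)]
    linarith [Real.add_one_le_exp C]
  refine ⟨R + C, ENNReal.iSup_eq_zero.2 fun N => le_antisymm ?_ zero_le⟩
  have hM : ∀ n ≥ N,
      pressureM f ψ Z (R + C) ε N ≤ ENNReal.ofReal ((C * Real.exp (-C)) ^ n) := by
    intro n hn
    obtain ⟨t, hcard, hcov⟩ := hC n
    calc pressureM f ψ Z (R + C) ε N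
        ≤ coverSum f ψ ε (R + C) ↑(t.map (.sectL X n)) := by
          refine pressureM_le_coverSum (Finset.countable_toSet _)
            (Finset.forall_mem_map.2 fun _ _ => hn) fun y _ => ?_
          obtain ⟨x, hx, hy⟩ := hcov y
          exact mem_iUnion₂.2 ⟨(x, n), Finset.mem_map_of_mem _ hx, hy⟩
      _ ≤ ENNReal.ofReal (t.card * Real.exp (R - (R + C)) ^ n) :=
          coverSum_map_sectL_le (fun x => hR (mem_range_self x)) hε _ n t
      _ ≤ ENNReal.ofReal ((C * Real.exp (-C)) ^ n) := by
          rw [mul_pow, sub_add_cancel_left]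
          gcongr
          exact_mod_cast hcard
  have hlim : Tendsto (fun n => ENNReal.ofReal ((C * Real.exp (-C)) ^ n)) atTop (𝓝 0) := by
    simpa using ENNReal.tendsto_ofReal (tendsto_pow_atTop_nhds_zero_of_lt_one (by positivity) hq)
  exact ge_of_tendsto hlim (eventually_atTop.2 ⟨N, hM⟩)

variable [MeasurableSpace X] (ν : Measure X) {s : ℝ} {K : ℝ≥0∞} {N : ℕ}

lemma measure_le_mul_coverSum (hψ : BddAbove (range ψ)) (hε : 0 < ε)
    (hν : ∀ n ≥ N, ∀ x, (bowenBall f ε n x ∩ Z).Nonempty →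
      ν (bowenBall f ε n x) ≤ K * ENNReal.ofReal (Real.exp (-n * s + birkhoffSum f ψ n x)))
    {Γ : Set (X × ℕ)} (hc : Γ.Countable) (hN : ∀ p ∈ Γ, N ≤ p.2)
    (hcov : Z ⊆ ⋃ p ∈ Γ, bowenBall f ε p.2 p.1) :
    ν Z ≤ K * coverSum f ψ ε s Γ := by
  have hball : ∀ p : Γ, ν (bowenBall f ε p.1.2 p.1.1 ∩ Z) ≤
      K * ENNReal.ofReal (Real.exp (-s * p.1.2 + ballSup f ψ ε p.1.2 p.1.1)) := by
    rintro ⟨⟨x, n⟩, hp⟩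
    rcases (bowenBall f ε n x ∩ Z).eq_empty_or_nonempty with h | h
    · simp [h]
    calc ν (bowenBall f ε n x ∩ Z) ≤ ν (bowenBall f ε n x) := measure_mono inter_subset_left
      _ ≤ K * ENNReal.ofReal (Real.exp (-n * s + birkhoffSum f ψ n x)) := hν n (hN _ hp) x h
      _ ≤ _ := by
        gcongr K * ENNReal.ofReal (Real.exp ?_)
        linarith [birkhoffSum_le_ballSup (f := f) hψ hε n x]
  calc ν Z ≤ ν (⋃ p ∈ Γ, bowenBall f ε p.2 p.1 ∩ Z) :=
        measure_mono <| by rw [← iUnion₂_inter]; exact subset_inter hcov subset_rfl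
    _ ≤ ∑' p : Γ, ν (bowenBall f ε p.1.2 p.1.1 ∩ Z) := measure_biUnion_le ν hc _
    _ ≤ _ := (ENNReal.tsum_le_tsum hball).trans_eq ENNReal.tsum_mul_left

theorem measure_le_mul_pressureOuter (hψ : BddAbove (range ψ)) (hε : 0 < ε)
    (hK₀ : K ≠ 0) (hK : K ≠ ∞)
    (hν : ∀ n ≥ N, ∀ x, (bowenBall f ε n x ∩ Z).Nonempty →
      ν (bowenBall f ε n x) ≤ K * ENNReal.ofReal (Real.exp (-n * s + birkhoffSum f ψ n x))) :
    ν Z ≤ K * pressureOuter f ψ Z s ε := by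
  rw [mul_comm, ← ENNReal.div_le_iff_le_mul (.inl hK₀) (.inl hK)]
  refine le_iSup_of_le N <| le_iInf₂ fun Γ hc => le_iInf₂ fun hN hcov => ?_
  rw [ENNReal.div_le_iff_le_mul (.inl hK₀) (.inl hK), mul_comm]
  exact measure_le_mul_coverSum ν hψ hε hν hc hN hcov

end Pressure

theorem pressure_distribution_principle_general
    {X : Type*} [MetricSpace X] [CompactSpace X] [MeasurableSpace X] [BorelSpace X]
    (f : X → X) (hf : Continuous f) (ψ : X → ℝ) (hψ : Continuous ψ)
    (Z : Set X) (ε s : ℝ) (hε : 0 < ε)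
    (μ : ℕ → ProbabilityMeasure X) (K : ℝ) (hK : 0 < K)
    (ν : ProbabilityMeasure X)
    (hlim : ∃ ι : ℕ → ℕ, StrictMono ι ∧ Tendsto (fun k => μ (ι k)) atTop (𝓝 ν))
    (hνZ : 0 < (ν : Measure X) Z)
    (hball : ∃ N : ℕ, ∀ n ≥ N, ∀ x : X, (bowenBall f ε n x ∩ Z).Nonempty →
      atTop.limsup (fun k : ℕ => ((μ k : Measure X) (bowenBall f ε n x)).toReal) ≤
        K * Real.exp (-(n : ℝ) * s + birkhoffSum f ψ n x)) :
    s ≤ pressureEps f ψ Z ε := by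
  obtain ⟨ι, hι, hμν⟩ := hlim
  obtain ⟨N, hN⟩ := hball
  have hψ' : BddAbove (range ψ) := (isCompact_range hψ).bddAbove
  have hν : ∀ n ≥ N, ∀ x, (bowenBall f ε n x ∩ Z).Nonempty →
      (ν : Measure X) (bowenBall f ε n x) ≤
        ENNReal.ofReal K * ENNReal.ofReal (Real.exp (-n * s + birkhoffSum f ψ n x)) :=
    fun n hn x hx => (ENNReal.ofReal_mul hK.le).symm ▸
      ProbabilityMeasure.measure_le_ofReal_of_limsup_toReal_le hι hμν (isOpen_bowenBall hf n x)
        (hN n hn x hx)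
  have hpos : pressureOuter f ψ Z s ε ≠ 0 := by
    intro h0
    have := measure_le_mul_pressureOuter (ν : Measure X) hψ' hε
      (ENNReal.ofReal_pos.2 hK).ne' ENNReal.ofReal_ne_top hν
    rw [h0, mul_zero] at this
    exact hνZ.ne' (le_antisymm this zero_le)
  obtain ⟨α₀, hα₀⟩ : ∃ α, pressureOuter f ψ Z α ε = 0 := exists_pressureOuter_eq_zero hψ' hε
  refine le_csInf ⟨α₀, hα₀⟩ fun α hα => le_of_not_gt fun hαs => hpos ?_
  exact le_antisymm ((pressureOuter_anti hαs.le).trans_eq hα) zero_le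

/-- **Generalised pressure distribution principle.** -/
theorem pressure_distribution_principle
    {X : Type*} [MetricSpace X] [CompactSpace X] [MeasurableSpace X] [BorelSpace X]
    (f : X → X) (hf : Continuous f) (ψ : X → ℝ) (hψ : Continuous ψ)
    (Z : Set X) (hZ : MeasurableSet Z) (ε s : ℝ) (hε : 0 < ε) (hs : 0 ≤ s)
    (μ : ℕ → ProbabilityMeasure X) (K : ℝ) (hK : 0 < K)
    (ν : ProbabilityMeasure X)
    (hlim : ∃ ι : ℕ → ℕ, StrictMono ι ∧ Tendsto (fun k => μ (ι k)) atTop (𝓝 ν))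
    (hνZ : 0 < (ν : Measure X) Z)
    (hball : ∃ N : ℕ, ∀ n ≥ N, ∀ x : X, (bowenBall f ε n x ∩ Z).Nonempty →
      atTop.limsup (fun k : ℕ => ((μ k : Measure X) (bowenBall f ε n x)).toReal) ≤
        K * Real.exp (-(n : ℝ) * s + birkhoffSum f ψ n x)) :
    s ≤ pressureEps f ψ Z ε :=
  pressure_distribution_principle_general f hf ψ hψ Z ε s hε μ K hK ν hlim hνZ hball
end
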